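/- arXiv:2005.09762 — 4 statements merged into one kernel-verified Lean document; each statement's English description precedes it below -/
import Mathlib

section
/- Among all matrices B with exactly one entry equal to 1 and all other entries 0, B = E_{n,1} is the unique choice such that N + B is invertible, where N is the n×n nilpotent single Jordan block (superdiagonal of ones). -/
/-!
If `i` is not the last row, the last row of `N + E i j` vanishes; if `j` is not the first
column, its first column vanishes. The remaining matrix `N + E (n - 1) 0` is the permutation
matrix of the cyclic shift `finRotate n`, whose determinant is its sign `±1`.
-/

open Matrix

namespace Matrix

variable (R : Type*)

def shiftMatrix [Zero R] [One R] (n : ℕ) : Matrix (Fin n) (Fin n) R :=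
  of fun i j => if (i : ℕ) + 1 = j then 1 else 0

variable {R}

section ZeroOne

variable [Zero R] [One R] {n : ℕ}

theorem shiftMatrix_apply (i j : Fin n) :
    shiftMatrix R n i j = if (i : ℕ) + 1 = j then 1 else 0 :=
  rfl

theorem shiftMatrix_last_row (j : Fin (n + 1)) : shiftMatrix R (n + 1) (Fin.last n) j = 0 :=
  if_neg (by rw [Fin.val_last]; omega)

theorem shiftMatrix_zero_col (i : Fin (n + 1)) : shiftMatrix R (n + 1) i 0 = 0 := by
  simp [shiftMatrix_apply]

end ZeroOne

variable [CommRing R] {n : ℕ}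

theorem shiftMatrix_add_single_last_zero :
    shiftMatrix R (n + 1) + single (Fin.last n) 0 1 = (finRotate (n + 1)).permMatrix R := by
  ext k l
  simp only [add_apply, PEquiv.toMatrix_apply, Equiv.toPEquiv_apply, Option.mem_def,
    Option.some.injEq]
  rcases eq_or_ne k (Fin.last n) with rfl | hk
  · simp [shiftMatrix_last_row, single_apply, eq_comm]
  · rw [single_apply_of_row_ne (Ne.symm hk), add_zero, shiftMatrix_apply]
    exact if_congr (by rw [Fin.ext_iff, coe_finRotate_of_ne_last hk]) rfl rfl

theorem det_shiftMatrix_add_single_of_ne_last {i j : Fin (n + 1)} (hi : i ≠ Fin.last n) (c : R) :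
    (shiftMatrix R (n + 1) + single i j c).det = 0 :=
  det_eq_zero_of_row_eq_zero (Fin.last n) fun l => by
    rw [add_apply, shiftMatrix_last_row, single_apply_of_row_ne hi, add_zero]

theorem det_shiftMatrix_add_single_of_ne_zero {i j : Fin (n + 1)} (hj : j ≠ 0) (c : R) :
    (shiftMatrix R (n + 1) + single i j c).det = 0 :=
  det_eq_zero_of_column_eq_zero 0 fun k => by
    rw [add_apply, shiftMatrix_zero_col, single_apply_of_col_ne _ _ hj, add_zero]

theorem isUnit_det_shiftMatrix_add_single_last_zero :
    IsUnit (shiftMatrix R (n + 1) + single (Fin.last n) 0 1).det := by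
  rw [shiftMatrix_add_single_last_zero, det_permutation]
  exact (Equiv.Perm.sign (finRotate (n + 1))).isUnit.map (Int.castRingHom R)

theorem det_shiftMatrix_add_single_ne_zero_iff [Nontrivial R] (i j : Fin (n + 1)) :
    (shiftMatrix R (n + 1) + single i j 1).det ≠ 0 ↔ i = Fin.last n ∧ j = 0 := by
  refine ⟨fun h => ⟨?_, ?_⟩, ?_⟩
  · by_contra hi; exact h (det_shiftMatrix_add_single_of_ne_last hi 1)
  · by_contra hj; exact h (det_shiftMatrix_add_single_of_ne_zero hj 1)
  · rintro ⟨rfl, rfl⟩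
    exact isUnit_det_shiftMatrix_add_single_last_zero.ne_zero

end Matrix

theorem stmt6_general (n : ℕ) (N : Matrix (Fin n) (Fin n) ℂ)
    (hN : ∀ i j, N i j = if (i : ℕ) + 1 = (j : ℕ) then 1 else 0)
    (i j : Fin n) :
    (N + Matrix.single i j 1).det ≠ 0 ↔ ((i : ℕ) = n - 1 ∧ (j : ℕ) = 0) := by
  obtain rfl : N = shiftMatrix ℂ n := ext hN
  cases n with
  | zero => exact i.elim0
  | succ m =>
    rw [det_shiftMatrix_add_single_ne_zero_iff, Fin.ext_iff, Fin.ext_iff, Fin.val_last,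
      Fin.val_zero, Nat.add_sub_cancel]

theorem stmt6 (n : ℕ) (hn : 2 ≤ n) (N : Matrix (Fin n) (Fin n) ℂ)
    (hN : ∀ i j, N i j = if (i : ℕ) + 1 = (j : ℕ) then 1 else 0)
    (i j : Fin n) :
    (N + Matrix.single i j 1).det ≠ 0 ↔ ((i : ℕ) = n - 1 ∧ (j : ℕ) = 0) :=
  stmt6_general n N hN i j
end

section
/- Coefficient theorem for digraphs: for a directed graph G on n vertices with adjacency matrix A, the coefficient a_i of x^i in the characteristic polynomial det(xI − A) = xⁿ + a_{n−1}x^{n−1} + ⋯ + a₀ equals Σ_H (−1)^{c(H)}, where the sum runs over all subgraphs H on exactly n−i vertices that are vertex-disjoint unions of simple directed cycles (equivalently, spanned subsets S of size n−i together with a permutation of S all of whose edges lie in G), and c(H) is the number of cycles in H. -/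
/-! The coefficient of `x^i` in `det (x - A)` is `(-1)^(n-i)` times the sum of the principal
minors of size `n - i`. Expanding such a minor over the permutations `σ` of its index set `S`,
the product `∏ A x (σ x)` of a 0/1 matrix is the indicator that all edges of `σ` lie in `G`, and
`(-1)^|S| · sign σ = (-1)^c`, where `c` counts the cycles of `σ` with fixed points as loops. -/

open Matrix Finset Equiv

theorem Equiv.Perm.neg_one_pow_card_mul_sign {α : Type*} [Fintype α] [DecidableEq α]
    (σ : Perm α) :
    (-1 : ℤ) ^ Fintype.card α * (Perm.sign σ : ℤ) =
      (-1) ^ (σ.cycleType.card + (Fintype.card α - σ.support.card)) := by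
  obtain ⟨k, hk⟩ := Nat.exists_eq_add_of_le (card_le_univ σ.support)
  rw [Perm.sign_of_cycleType, Perm.sum_cycleType, hk, Nat.add_sub_cancel_left]
  push_cast
  rw [← pow_add, show σ.support.card + k + (σ.support.card + σ.cycleType.card) =
      σ.cycleType.card + k + 2 * σ.support.card by ring, pow_add, pow_mul]
  norm_num

theorem Matrix.neg_one_pow_card_mul_det_of_zero_one {ι : Type*} [Fintype ι] [DecidableEq ι]
    (B : Matrix ι ι ℤ) (hB : ∀ i j, B i j = 0 ∨ B i j = 1) :
    (-1 : ℤ) ^ Fintype.card ι * B.det =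
      ∑ σ : Perm ι, if ∀ x, B x (σ x) = 1 then
        (-1 : ℤ) ^ (σ.cycleType.card + (Fintype.card ι - σ.support.card)) else 0 := by
  rw [← det_transpose, det_apply', mul_sum]
  simp only [transpose_apply]
  refine sum_congr rfl fun σ _ => ?_
  rw [← mul_assoc, Int.cast_id, σ.neg_one_pow_card_mul_sign]
  split_ifs with hσ
  · simp [hσ]
  · obtain ⟨x, hx⟩ := not_forall.mp hσ
    rw [prod_eq_zero (mem_univ x) ((hB x (σ x)).resolve_right hx), mul_zero]

theorem stmt9 (n : ℕ) (A : Matrix (Fin n) (Fin n) ℤ)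
    (h01 : ∀ i j, A i j = 0 ∨ A i j = 1) (i : ℕ) (hi : i < n) :
    A.charpoly.coeff i =
      ∑ S : Finset (Fin n), (if S.card = n - i then
        (∑ σ : Equiv.Perm {x // x ∈ S},
          if (∀ x : {x // x ∈ S}, A x.1 (σ x).1 = 1) then
            (-1 : ℤ) ^ (σ.cycleType.card + (S.card - σ.support.card)) else 0)
      else 0) := by
  have hminors := A.charpoly_coeff_eq_sum_minors (n - i) (by simp)
  rw [Fintype.card_fin, Nat.sub_sub_self hi.le] at hminors
  rw [hminors, mul_sum, ← sum_filter]
  refine sum_congr (by ext; simp) fun S hS => ?_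
  rw [← (mem_filter.mp hS).2]
  simpa using neg_one_pow_card_mul_det_of_zero_one
    (A.submatrix (Subtype.val : S → Fin n) Subtype.val) fun x y => h01 x y
end

section
/- Adding an edge e to a digraph G changes the characteristic polynomial of its adjacency matrix only if e lies on a directed cycle of the new graph G+e. Equivalently, if the new edge (i,j) is not contained in any directed cycle of G+e, then char(A + E_{i,j}) = char(A). -/
/-!
Let `p a` say that `a` is reachable from `j` in `G + e`. No edge of `G + e` leaves the set `p`,
so `A + E_{i,j}` and `A` are both block triangular for the splitting `p`, `¬ p`, and their
characteristic polynomials are the products of those of the two diagonal blocks. Since `j` is in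
`p` and `i` is not, the new entry `(i, j)` lies off the diagonal blocks, which are therefore the
same for both matrices.
-/

open Matrix Polynomial

namespace Matrix

variable {n R : Type*} [Fintype n] [DecidableEq n] [CommRing R]

lemma charmatrix_toSquareBlockProp (M : Matrix n n R) (p : n → Prop) [DecidablePred p] :
    (M.toSquareBlockProp p).charmatrix = M.charmatrix.toSquareBlockProp p := by
  ext a b : 1
  simp [charmatrix_apply, toSquareBlockProp_def, diagonal_apply, Subtype.ext_iff]

lemma charpoly_eq_mul_of_twoBlockTriangular (M : Matrix n n R) (p : n → Prop) [DecidablePred p]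
    (hM : ∀ a, p a → ∀ b, ¬ p b → M a b = 0) :
    M.charpoly = (M.toSquareBlockProp p).charpoly * (M.toSquareBlockProp (¬ p ·)).charpoly := by
  rw [charpoly, twoBlockTriangular_det' _ p, charpoly, charpoly,
    charmatrix_toSquareBlockProp, charmatrix_toSquareBlockProp]
  intro a ha b hb
  have hab : a ≠ b := fun h => hb (h ▸ ha)
  simp [charmatrix_apply_ne _ _ _ hab, hM a ha b hb]

lemma charpoly_eq_of_twoBlockTriangular {M N : Matrix n n R} (p : n → Prop) [DecidablePred p]
    (hM : ∀ a, p a → ∀ b, ¬ p b → M a b = 0) (hN : ∀ a, p a → ∀ b, ¬ p b → N a b = 0)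
    (hdiag : ∀ a b, (p a ↔ p b) → M a b = N a b) :
    M.charpoly = N.charpoly := by
  have hblock : ∀ q : n → Prop, (∀ a b, q a → q b → (p a ↔ p b)) → ∀ [DecidablePred q],
      M.toSquareBlockProp q = N.toSquareBlockProp q := fun q hq _ => by
    ext a b
    exact hdiag a b (hq a b a.2 b.2)
  rw [charpoly_eq_mul_of_twoBlockTriangular M p hM, charpoly_eq_mul_of_twoBlockTriangular N p hN,
    hblock p (fun _ _ ha hb => iff_of_true ha hb),
    hblock (¬ p ·) (fun _ _ ha hb => iff_of_false ha hb)]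

theorem charpoly_add_single_eq_of_not_reflTransGen (M : Matrix n n R) (i j : n) (c : R)
    (h : ¬ Relation.ReflTransGen (fun a b => (M + single i j c) a b ≠ 0) j i) :
    (M + single i j c).charpoly = M.charpoly := by
  classical
  set p : n → Prop := Relation.ReflTransGen (fun a b => (M + single i j c) a b ≠ 0) j
  have hp_closed : ∀ a, p a → ∀ b, ¬ p b → (M + single i j c) a b = 0 :=
    fun a ha b hb => by_contra fun hab => hb (ha.tail hab)
  have hsingle : ∀ a b, (p b → p a) → single i j c a b = 0 := fun a b hba =>
    single_apply_of_ne _ _ _ _ _ fun ⟨hia, hjb⟩ => h (hia ▸ hba (hjb ▸ .refl))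
  refine charpoly_eq_of_twoBlockTriangular p hp_closed (fun a ha b hb => ?_) fun a b hab => ?_
  · simpa [hsingle a b fun _ => ha] using hp_closed a ha b hb
  · simp [hsingle a b hab.mpr]

end Matrix

theorem stmt11_general (n : ℕ) (A : Matrix (Fin n) (Fin n) ℂ)
    (i j : Fin n)
    (A' : Matrix (Fin n) (Fin n) ℂ)
    (hA' : A' = A + Matrix.single i j 1)
    (hnocycle : ¬ Relation.ReflTransGen (fun a b => A' a b ≠ 0) j i) :
    A'.charpoly = A.charpoly := by
  subst hA'
  exact charpoly_add_single_eq_of_not_reflTransGen A i j 1 hnocycle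

theorem stmt11 (n : ℕ) (A : Matrix (Fin n) (Fin n) ℂ)
    (h01 : ∀ a b, A a b = 0 ∨ A a b = 1)
    (i j : Fin n) (hij : A i j = 0)
    (A' : Matrix (Fin n) (Fin n) ℂ)
    (hA' : A' = A + Matrix.single i j 1)
    (hnocycle : ¬ Relation.ReflTransGen (fun a b => A' a b ≠ 0) j i) :
    A'.charpoly = A.charpoly :=
  stmt11_general n A i j A' hA' hnocycle
end

section
/- Let L be a directed Laplacian and λ ≠ 0 an eigenvalue with left eigenvectors u₁,…,u_r and right eigenvectors v₁,…,v_r (each family linearly independent). Then the vector w = Σ_k v_k ⊗ u_k ∈ ℂ^{n²} is not constant on each block of n consecutive coordinates, in the sense that there exist indices i ≠ j and a column index such that the corresponding entries of w differ. In particular, there is a rank-one perturbation B of Laplacian type (B = E_{i,i} − E_{i,j}, i.e., entries +1 on the diagonal and −1 off the diagonal in one row, or its negative) with Σ_k u_kᵀ B v_k ≠ 0. -/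
open Matrix

theorem stmt16 (n r : ℕ) (hr : 0 < r) (A : Matrix (Fin n) (Fin n) ℂ)
    (h01 : ∀ i j, A i j = 0 ∨ A i j = 1) (hloop : ∀ i, A i i = 0)
    (L : Matrix (Fin n) (Fin n) ℂ)
    (hL : L = Matrix.diagonal (fun i => ∑ j, A i j) - A)
    (lam : ℂ) (hlam : lam ≠ 0)
    (u v : Fin r → Fin n → ℂ)
    (hu : ∀ k, (u k) ᵥ* L = lam • (u k))
    (hv : ∀ k, L *ᵥ (v k) = lam • (v k))
    (hul : LinearIndependent ℂ u) (hvl : LinearIndependent ℂ v) :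
    (∃ (c i j : Fin n), (∑ k, v k c * u k i) ≠ ∑ k, v k c * u k j) ∧
    ∃ i j : Fin n, i ≠ j ∧
      (∑ k, u k ⬝ᵥ ((Matrix.single i i (1 : ℂ) -
        Matrix.single i j 1) *ᵥ v k)) ≠ 0 := by
  have k0 : Fin r := ⟨0, hr⟩
  -- n ≥ 2, otherwise contradiction
  have hn2 : 2 ≤ n := by
    by_contra hn
    push_neg at hn
    interval_cases n
    · exact hul.ne_zero k0 (funext fun i => i.elim0)
    · -- n = 1 : L = 0, so lam • v k = 0, v k = 0
      have hL0 : L = 0 := by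
        ext i j
        fin_cases i; fin_cases j
        simp [hL, hloop 0]
      have := hv k0
      rw [hL0] at this
      simp only [Matrix.zero_mulVec] at this
      exact hvl.ne_zero k0 (((smul_eq_zero.mp this.symm)).resolve_left hlam)
  have hn0 : 0 < n := by omega
  have i0 : Fin n := ⟨0, hn0⟩
  -- L applied to the all-ones vector is zero
  have hL1 : L *ᵥ (fun _ => (1 : ℂ)) = 0 := by
    funext i
    simp [hL, Matrix.sub_mulVec, Matrix.mulVec_diagonal, mulVec, dotProduct,
      Matrix.diagonal_apply, Finset.sum_ite_eq]
  -- each u k sums to zero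
  have husum : ∀ k, ∑ i, u k i = 0 := by
    intro k
    have h1 : lam * ∑ i, u k i = 0 := by
      have h2 : (u k ᵥ* L) ⬝ᵥ (fun _ => (1 : ℂ)) = (lam • u k) ⬝ᵥ (fun _ => (1 : ℂ)) := by
        rw [hu k]
      rw [← Matrix.dotProduct_mulVec, hL1] at h2
      simp only [dotProduct, Pi.zero_apply, mul_zero, Finset.sum_const_zero,
        Pi.smul_apply, smul_eq_mul, mul_one] at h2
      rw [Finset.mul_sum]
      exact h2.symm
    exact (mul_eq_zero.mp h1).resolve_left hlam
  have hvlin := Fintype.linearIndependent_iff.mp hvl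
  have hulin := Fintype.linearIndependent_iff.mp hul
  constructor
  · -- first part
    by_contra hc
    push_neg at hc
    have hzero : ∀ c i, (∑ k, v k c * u k i) = 0 := by
      intro c i
      have hsum : (n : ℂ) * (∑ k, v k c * u k i) = ∑ j, ∑ k, v k c * u k j := by
        rw [Finset.sum_congr rfl (fun j _ => (hc c i j).symm)]
        simp [Finset.sum_const, mul_comm]
      rw [Finset.sum_comm] at hsum
      simp_rw [← Finset.mul_sum, husum, mul_zero, Finset.sum_const_zero] at hsum
      have hn : (n : ℂ) ≠ 0 := Nat.cast_ne_zero.mpr (by omega)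
      exact (mul_eq_zero.mp hsum).resolve_left hn
    -- deduce v = 0
    have hv0 : ∀ c k, v k c = 0 := by
      intro c
      apply hulin (fun k => v k c)
      funext i
      simpa [Finset.sum_apply] using hzero c i
    exact hvl.ne_zero k0 (funext fun c => hv0 c k0)
  · -- second part
    by_contra hc
    push_neg at hc
    have key : ∀ (i j : Fin n) (uu vv : Fin n → ℂ),
        uu ⬝ᵥ ((Matrix.single i i (1:ℂ) - Matrix.single i j 1) *ᵥ vv)
          = uu i * (vv i - vv j) := by
      intro i j uu vv
      simp [dotProduct, mulVec, Matrix.single, Finset.mul_sum, sub_mul, mul_sub,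
        Finset.sum_sub_distrib, ite_and, Finset.sum_ite_eq, Finset.sum_ite_eq']
    have hc' : ∀ i j : Fin n, i ≠ j →
        (∑ k, u k i * (v k i - v k j)) = 0 := by
      intro i j hij
      have := hc i j hij
      simpa [key] using this
    -- for each i, the vector ∑ k, (u k i) • v k equals (g i) • ones
    have hconst : ∀ i : Fin n, (fun j => ∑ k, u k i * v k j)
        = fun _ => ∑ k, u k i * v k i := by
      intro i
      funext j
      by_cases hij : i = j
      · rw [hij]
      · have := hc' i j hij
        simp only [mul_sub, Finset.sum_sub_distrib, sub_eq_zero] at this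
        exact this.symm
    have hg0 : ∀ i : Fin n, (∑ k, u k i * v k i) = 0 := by
      intro i
      have h1 : L *ᵥ (fun j => ∑ k, u k i * v k j)
          = fun j => lam * ∑ k, u k i * v k j := by
        funext m
        simp only [mulVec, dotProduct, Finset.mul_sum]
        rw [Finset.sum_comm]
        congr 1
        funext k
        have := congrFun (hv k) m
        simp only [mulVec, dotProduct, Pi.smul_apply, smul_eq_mul] at this
        calc ∑ j, L m j * (u k i * v k j)
            = u k i * ∑ j, L m j * v k j := by
              rw [Finset.mul_sum]; congr 1; funext j; ring
          _ = u k i * (lam * v k m) := by rw [this]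
          _ = lam * (u k i * v k m) := by ring
      have e2 := congrFun h1 i0
      rw [hconst i] at e2
      have hgj : (∑ k, u k i * v k i0) = ∑ k, u k i * v k i := congrFun (hconst i) i0
      rw [hgj] at e2
      have h2 : L *ᵥ (fun _ => (∑ k, u k i * v k i) : Fin n → ℂ) = 0 := by
        funext m
        have hrow := congrFun hL1 m
        simp only [mulVec, dotProduct, Pi.zero_apply, mul_one] at hrow ⊢
        rw [← Finset.sum_mul, hrow, zero_mul]
      rw [h2] at e2
      have h3 : lam * ∑ k, u k i * v k i = 0 := by
        rw [← e2]; simp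
      exact (mul_eq_zero.mp h3).resolve_left hlam
    -- so ∑ k, (u k i) • v k = 0, hence u k i = 0 by lin indep of v
    have hu0 : ∀ i k, u k i = 0 := by
      intro i
      apply hvlin (fun k => u k i)
      funext j
      have := congrFun (hconst i) j
      rw [hg0 i] at this
      simpa [Finset.sum_apply] using this
    exact hul.ne_zero k0 (funext fun i => hu0 i k0)
end
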